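/- arXiv:2308.05293 — 3 statements merged into one kernel-verified Lean document; each statement's English description precedes it below -/
import Mathlib

section
/- Let K_n be the complete graph on vertices P_1, …, P_n with n ≥ 4. Then the complete linear system |(n−2)P_1 − P_2| is empty; that is, there is no function f : V(K_n) → ℤ such that Δ(f) + (n−2)P_1 − P_2 is an effective divisor. -/
open scoped Classical

namespace GraphDiv

variable {V : Type*}

/-- The Laplacian divisor of an integer-valued function on the vertices. -/
noncomputable def lap (G : SimpleGraph V) [Fintype V] (f : V → ℤ) : V → ℤ :=
  fun P => ∑ Q : V, if G.Adj P Q then f P - f Q else 0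

/-- Linear equivalence of divisors: `D ∼ D'` iff `D - D' = Δ(f)` for some `f`. -/
def LinEquiv (G : SimpleGraph V) [Fintype V] (D D' : V → ℤ) : Prop :=
  ∃ f : V → ℤ, D - D' = lap G f

/-- A divisor is effective if all its coefficients are nonnegative. -/
def Effective (D : V → ℤ) : Prop := ∀ P, 0 ≤ D P

/-- The degree of a divisor. -/
def degDiv [Fintype V] (D : V → ℤ) : ℤ := ∑ P : V, D P

/-- The complete linear system of a divisor. -/
def linSys (G : SimpleGraph V) [Fintype V] (D : V → ℤ) : Set (V → ℤ) :=
  {E | Effective E ∧ LinEquiv G E D}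

/-- `RankEq G D r` says the Baker–Norine rank of `D` equals `r`. -/
def RankEq (G : SimpleGraph V) [Fintype V] (D : V → ℤ) (r : ℤ) : Prop :=
  -1 ≤ r ∧
  (∀ E : V → ℤ, Effective E → degDiv E ≤ r → (linSys G (D - E)).Nonempty) ∧
  ∃ E : V → ℤ, Effective E ∧ degDiv E = r + 1 ∧ linSys G (D - E) = ∅

/-- The divisor consisting of a single vertex. -/
noncomputable def unit (P : V) : V → ℤ := fun Q => if Q = P then 1 else 0

/-- A graph is 2-edge-connected if it is connected and stays connected
after removing any single edge. -/
def TwoEdgeConnected (G : SimpleGraph V) : Prop :=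
  G.Connected ∧ ∀ v w : V, G.Adj v w → (G.deleteEdges {s(v, w)}).Connected

/-- Action of a graph automorphism on divisors. -/
def divAct {G : SimpleGraph V} (σ : G ≃g G) (D : V → ℤ) : V → ℤ :=
  fun v => D (σ.symm v)

/-- Two vertices lie in the same orbit of a subgroup of automorphisms. -/
def vrel {G : SimpleGraph V} (H : Subgroup (G ≃g G)) (v w : V) : Prop :=
  ∃ σ ∈ H, σ v = w

/-- An edge is collapsed in the quotient: its endpoints lie in the same vertex orbit. -/
def Collapsed {G : SimpleGraph V} (H : Subgroup (G ≃g G)) (e : Sym2 V) : Prop :=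
  ∃ a b : V, e = s(a, b) ∧ vrel H a b

/-- The quotient morphism `G → G/H` is harmonic: for every vertex `P`, the number of
edges at `P` lying above a given non-collapsed edge-orbit incident to the class of `P`
is independent of the choice of that edge-orbit. -/
def QuotHarmonic (G : SimpleGraph V) (H : Subgroup (G ≃g G)) : Prop :=
  ∀ (P : V) (e₁ e₂ : Sym2 V), e₁ ∈ G.edgeSet → e₂ ∈ G.edgeSet →
    (∃ σ ∈ H, P ∈ Sym2.map (⇑σ) e₁) → (∃ σ ∈ H, P ∈ Sym2.map (⇑σ) e₂) →
    ¬ Collapsed H e₁ → ¬ Collapsed H e₂ →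
    Nat.card {e : Sym2 V // e ∈ G.edgeSet ∧ P ∈ e ∧ ∃ σ ∈ H, Sym2.map (⇑σ) e = e₁} =
    Nat.card {e : Sym2 V // e ∈ G.edgeSet ∧ P ∈ e ∧ ∃ σ ∈ H, Sym2.map (⇑σ) e = e₂}

/-- `H` acts harmonically on `G`: for every subgroup `Δ ≤ H` the quotient morphism
`G → G/Δ` is harmonic. -/
def HarmonicAction (G : SimpleGraph V) (H : Subgroup (G ≃g G)) : Prop :=
  ∀ Δ : Subgroup (G ≃g G), Δ ≤ H → QuotHarmonic G Δ

/-- `P` is a Galois point with respect to `|D|`. -/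
def IsGaloisPoint (G : SimpleGraph V) [Fintype V] (D : V → ℤ) (P : V) : Prop :=
  RankEq G (D - unit P) 1 ∧
  (∀ Q : V, RankEq G (D - unit P - unit Q) 0) ∧
  ∃ H : Subgroup (G ≃g G), (Nat.card H : ℤ) = degDiv D - 1 ∧
    (∃ v w : V, ¬ vrel H v w) ∧
    HarmonicAction G H ∧
    ∃ E₁ E₂ : V → ℤ, E₁ ≠ E₂ ∧ E₁ ∈ linSys G (D - unit P) ∧ E₂ ∈ linSys G (D - unit P) ∧
      ∀ σ ∈ H, divAct σ E₁ = E₁ ∧ divAct σ E₂ = E₂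

/-- A divisor is `q`-reduced. -/
def QReduced (G : SimpleGraph V) [Fintype V] (q : V) (D : V → ℤ) : Prop :=
  (∀ P : V, P ≠ q → 0 ≤ D P) ∧
  ∀ S : Finset V, S.Nonempty → q ∉ S →
    ∃ P ∈ S, D P < (((G.neighborFinset P).filter (fun Q => Q ∉ S)).card : ℤ)

/-- The wheel graph on `m + 1` vertices: hub `none` and rim `some i` for `i : Fin m`,
with the rim a cycle via `i ↦ i + 1 (mod m)`. -/
def wheel (m : ℕ) : SimpleGraph (Option (Fin m)) where
  Adj v w :=
    match v, w with
    | none, none => False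
    | none, some _ => True
    | some _, none => True
    | some i, some j => i ≠ j ∧ ((i.val + 1) % m = j.val ∨ (j.val + 1) % m = i.val)
  symm := by
    constructor
    intro v w h
    cases v <;> cases w <;> simp_all <;> tauto
  loopless := by constructor; intro v; cases v <;> simp

/-- The 4-cycle `P₁P₂P₃P₄` with the chord `P₁P₃` (vertices `0,1,2,3`). -/
def g4 : SimpleGraph (Fin 4) :=
  SimpleGraph.fromRel (fun v w =>
    (v = 0 ∧ w = 1) ∨ (v = 1 ∧ w = 2) ∨ (v = 2 ∧ w = 3) ∨ (v = 3 ∧ w = 0) ∨ (v = 0 ∧ w = 2))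

end GraphDiv

/-
On `K_n` the Laplacian is `Δ(f)(P) = n f(P) - ∑ f`, so all coefficients of `Δ(f)` are congruent
mod `n`, and they sum to `0`. If `Δ(f) + (n-2)P₁ - P₂` were effective, `a := Δ(f)(P₁) ≥ 2 - n`
and `Δ(f) ≥ 0` away from `P₁`, with `Δ(f)(P₂) ≥ 1`; the zero sum then forces `a < 0`, hence every
other coefficient is at least `a + n`, and `0 ≥ a + (n - 1)(a + n)` gives `a ≤ 1 - n`.
-/

namespace GraphDiv

variable {V : Type*} [Fintype V]

theorem degDiv_lap (G : SimpleGraph V) (f : V → ℤ) : degDiv (lap G f) = 0 := by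
  have hswap : degDiv (lap G f) = ∑ P : V, ∑ Q : V, if G.Adj P Q then f Q - f P else 0 := by
    unfold degDiv lap
    rw [Finset.sum_comm]
    simp only [G.adj_comm]
  have hneg : degDiv (lap G f) = -degDiv (lap G f) := by
    conv_rhs => rw [hswap]
    unfold degDiv lap
    simp only [← Finset.sum_neg_distrib]
    refine Finset.sum_congr rfl fun P _ => Finset.sum_congr rfl fun Q _ => ?_
    split_ifs <;> ring
  linarith

theorem lap_top_apply (f : V → ℤ) (P : V) :
    lap ⊤ f P = Fintype.card V * f P - ∑ Q : V, f Q := by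
  have hsum : lap ⊤ f P = ∑ Q : V, (f P - f Q) := by
    refine Finset.sum_congr rfl fun Q _ => ?_
    by_cases h : P = Q <;> simp [h]
  rw [hsum, Finset.sum_sub_distrib, Finset.sum_const, Finset.card_univ, nsmul_eq_mul]

theorem lap_top_add_card_le_of_lt (f : V → ℤ) {P Q : V} (h : lap ⊤ f P < lap ⊤ f Q) :
    lap ⊤ f P + Fintype.card V ≤ lap ⊤ f Q := by
  rw [lap_top_apply, lap_top_apply] at h ⊢
  have hstep : f P + 1 ≤ f Q := by
    by_contra! hle
    have : (Fintype.card V : ℤ) * f Q ≤ Fintype.card V * f P :=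
      mul_le_mul_of_nonneg_left (by omega) (Nat.cast_nonneg _)
    omega
  nlinarith

theorem not_effective_lap_top_add [DecidableEq V] {P P' : V} (hPP' : P ≠ P') (f : V → ℤ) :
    ¬ Effective (lap ⊤ f + fun v => if v = P then (Fintype.card V : ℤ) - 2
                                    else if v = P' then -1 else 0) := by
  intro h
  set D := lap ⊤ f
  set n : ℤ := (Fintype.card V : ℤ)
  have hP : 2 - n ≤ D P := by
    have := h P
    simp only [Pi.add_apply, ite_true] at this
    omega
  have hP' : 1 ≤ D P' := by
    have := h P'
    simp only [Pi.add_apply, if_neg hPP'.symm, ite_true] at this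
    omega
  have hrest : ∀ v ∈ Finset.univ.erase P, 0 ≤ D v := by
    intro v hv
    have := h v
    simp only [Pi.add_apply, if_neg (Finset.ne_of_mem_erase hv)] at this
    split_ifs at this <;> omega
  have hsum : D P + ∑ v ∈ Finset.univ.erase P, D v = 0 := by
    rw [Finset.add_sum_erase _ _ (Finset.mem_univ P)]
    exact degDiv_lap ⊤ f
  have hneg : D P < 0 := by
    have := Finset.single_le_sum hrest (Finset.mem_erase.2 ⟨hPP'.symm, Finset.mem_univ P'⟩)
    omega
  have hgap : ∀ v ∈ Finset.univ.erase P, D P + n ≤ D v := fun v hv =>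
    lap_top_add_card_le_of_lt f (by linarith [hrest v hv])
  have hcard : ((Finset.univ.erase P).card : ℤ) = n - 1 := by
    rw [Finset.card_erase_of_mem (Finset.mem_univ P), Finset.card_univ,
      Nat.cast_sub (Fintype.card_pos_iff.2 ⟨P⟩), Nat.cast_one]
  have hbig : (n - 1) * (D P + n) ≤ ∑ v ∈ Finset.univ.erase P, D v := by
    simpa only [nsmul_eq_mul, hcard] using Finset.card_nsmul_le_sum _ _ _ hgap
  nlinarith

end GraphDiv

open GraphDiv in
/-- On `K_n` (`n ≥ 4`), the linear system `|(n-2)P₁ - P₂|` is empty. -/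
theorem stmt3 (n : ℕ) (hn : 4 ≤ n) :
    ¬ ∃ f : Fin n → ℤ,
      Effective (lap (⊤ : SimpleGraph (Fin n)) f +
        fun v => if v = (⟨0, by omega⟩ : Fin n) then (n : ℤ) - 2
                 else if v = (⟨1, by omega⟩ : Fin n) then -1 else 0) := by
  rintro ⟨f, hf⟩
  have hne : (⟨0, by omega⟩ : Fin n) ≠ ⟨1, by omega⟩ := by simp [Fin.ext_iff]
  exact not_effective_lap_top_add hne f (by rwa [Fintype.card_fin])
end

section
/- Let W_n be the wheel graph on vertices P_1, …, P_n with n ≥ 5 (hub P_1), and let D = P_1 + ⋯ + P_n. Then the hub P_1 is a Galois point with respect to |D|, and no rim vertex P_i (2 ≤ i ≤ n) is a Galois point with respect to |D|. In particular, W_n has exactly one Galois point with respect to |D|. -/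
open scoped Classical

/-!
For the hub `P₁`, the divisor `D - P₁` is the sum of the rim vertices. As `P₁` is adjacent to all
other vertices, `D - P₁ - Q` is effective for `Q ≠ P₁` and becomes effective after borrowing at
`P₁` for `Q = P₁`, so `r(D - P₁ - Q) ≥ 0` for every `Q`; Dhar's burning criterion shows that
`D - P₁ - 2P₂` and `D - 2P₁ - P₂` are not equivalent to effective divisors. The rotations of the
rim form a cyclic group of order `n - 1 = deg D - 1`; it fixes the hub and acts freely on the rim,
which makes every subgroup harmonic, and it fixes both `D - P₁` and `(n - 1) P₁ ∈ |D - P₁|`.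

For a rim vertex `Pᵢ` and `Q = Pᵢ₊₂`, the vertices `Pᵢ, Pᵢ₊₂` are distinct and not adjacent, the
rim having at least four vertices. Then `D - Pᵢ - Pᵢ₊₂ - R` is equivalent to an effective divisor
for every vertex `R` (borrow at `R` if `R` is one of the two), so `r(D - Pᵢ - Pᵢ₊₂) ≠ 0`.
-/

open Fin.CommRing

theorem Fin.exists_apply_and_not_apply_add_one {m : ℕ} [NeZero m] (p : Fin m → Prop) {i j : Fin m}
    (hi : p i) (hj : ¬ p j) : ∃ k, p k ∧ ¬ p (k + 1) := by
  by_contra! h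
  have hall : ∀ n : ℕ, p (i + (n : Fin m)) := fun n => by
    induction n with
    | zero => simpa using hi
    | succ n ih => simpa [add_assoc] using h _ ih
  exact hj (by simpa using hall (j - i).val)

theorem Fin.natCast_ne_zero_of_lt {m k : ℕ} [NeZero m] (h0 : 0 < k) (hk : k < m) :
    (k : Fin m) ≠ 0 := by
  rw [Ne, Fin.natCast_eq_zero]
  exact fun h => absurd (Nat.le_of_dvd h0 h) (by omega)

namespace GraphDiv

section Divisors

variable {V : Type*} {G : SimpleGraph V}

theorem effective_unit (P : V) : Effective (unit P) := fun Q => by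
  unfold unit; split_ifs <;> norm_num

theorem Effective.add {D E : V → ℤ} (hD : Effective D) (hE : Effective E) : Effective (D + E) :=
  fun P => add_nonneg (hD P) (hE P)

variable [Fintype V]

theorem degDiv_add (D E : V → ℤ) : degDiv (D + E) = degDiv D + degDiv E :=
  Finset.sum_add_distrib

theorem lap_zero : lap G 0 = 0 :=
  funext fun P => by simp [lap]

theorem degDiv_unit (P : V) : degDiv (unit P) = 1 := by
  simp [degDiv, unit]

theorem Effective.eq_zero_of_degDiv_nonpos {E : V → ℤ} (hE : Effective E) (h : degDiv E ≤ 0) :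
    E = 0 :=
  funext fun P => le_antisymm
    ((Finset.single_le_sum (fun Q _ => hE Q) (Finset.mem_univ P)).trans h) (hE P)

theorem Effective.exists_eq_unit_of_degDiv_eq_one {E : V → ℤ} (hE : Effective E)
    (h : degDiv E = 1) : ∃ P, E = unit P := by
  obtain ⟨P, -, hP⟩ : ∃ P ∈ Finset.univ, E P ≠ 0 :=
    Finset.exists_ne_zero_of_sum_ne_zero (by rw [← degDiv, h]; norm_num)
  have hsum : E P + ∑ Q ∈ Finset.univ.erase P, E Q = 1 :=
    (Finset.add_sum_erase _ _ (Finset.mem_univ P)).trans h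
  have hrest : 0 ≤ ∑ Q ∈ Finset.univ.erase P, E Q := Finset.sum_nonneg fun Q _ => hE Q
  have hEP : E P = 1 := by have := hE P; omega
  have hzero : ∀ Q ∈ Finset.univ.erase P, E Q = 0 :=
    (Finset.sum_eq_zero_iff_of_nonneg fun Q _ => hE Q).1 (by omega)
  refine ⟨P, funext fun Q => ?_⟩
  by_cases hQ : Q = P
  · simp [unit, hQ, hEP]
  · simp [unit, hQ, hzero Q (Finset.mem_erase.2 ⟨hQ, Finset.mem_univ Q⟩)]

theorem mem_linSys_add_lap {D : V → ℤ} (f : V → ℤ) (h : Effective (D + lap G f)) :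
    D + lap G f ∈ linSys G D :=
  ⟨h, f, add_sub_cancel_left D (lap G f)⟩

theorem mem_linSys_self {D : V → ℤ} (h : Effective D) : D ∈ linSys G D :=
  ⟨h, 0, by rw [sub_self, lap_zero]⟩

theorem linSys_nonempty_of_effective {D : V → ℤ} (h : Effective D) : (linSys G D).Nonempty :=
  ⟨D, mem_linSys_self h⟩

theorem linSys_nonempty_of_sub {D E : V → ℤ} (hE : Effective E)
    (h : (linSys G (D - E)).Nonempty) : (linSys G D).Nonempty := by
  obtain ⟨F, hF, f, hf⟩ := h
  exact ⟨F + E, hF.add hE, f, by rw [← hf]; abel⟩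

theorem rankEq_zero_of {D : V → ℤ} (hD : (linSys G D).Nonempty) (Q : V)
    (hQ : linSys G (D - unit Q) = ∅) : RankEq G D 0 := by
  refine ⟨by norm_num, fun E hE hdeg => ?_, unit Q, effective_unit Q, degDiv_unit Q, hQ⟩
  rwa [hE.eq_zero_of_degDiv_nonpos hdeg, sub_zero]

theorem not_rankEq_zero_of {D : V → ℤ} (h : ∀ R, (linSys G (D - unit R)).Nonempty) :
    ¬ RankEq G D 0 := by
  rintro ⟨-, -, E, hE, hdeg, hempty⟩
  obtain ⟨R, rfl⟩ := hE.exists_eq_unit_of_degDiv_eq_one hdeg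
  exact (h R).ne_empty hempty

theorem rankEq_one_of [Nonempty V] {D E : V → ℤ} (h : ∀ Q, (linSys G (D - unit Q)).Nonempty)
    (hE : Effective E) (hdeg : degDiv E = 2) (hempty : linSys G (D - E) = ∅) :
    RankEq G D 1 := by
  refine ⟨by norm_num, fun F hF hFdeg => ?_, E, hE, hdeg, hempty⟩
  rcases (show degDiv F ≤ 0 ∨ degDiv F = 1 by omega) with h0 | h1
  · rw [hF.eq_zero_of_degDiv_nonpos h0, sub_zero]
    exact linSys_nonempty_of_sub (effective_unit _) (h (Classical.arbitrary V))
  · obtain ⟨Q, rfl⟩ := hF.exists_eq_unit_of_degDiv_eq_one h1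
    exact h Q

end Divisors

section Laplacian

variable {V : Type*} [Fintype V] {G : SimpleGraph V}

theorem lap_unit_apply (v P : V) :
    lap G (unit v) P = if P = v then (G.degree v : ℤ) else if G.Adj P v then -1 else 0 := by
  unfold lap
  split_ifs with hP hadj
  · subst hP
    rw [← G.card_neighborFinset_eq_degree, G.neighborFinset_eq_filter, Finset.card_filter]
    push_cast
    refine Finset.sum_congr rfl fun Q _ => ?_
    rcases em (G.Adj P Q) with h | h
    · simp [unit, h, h.ne']
    · simp [h]
  all_goals
    rw [Finset.sum_eq_single v (fun Q _ hQ => by simp [unit, hP, hQ]) (by simp)]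
    simp [unit, hP, hadj]

/-- Borrowing at `v`: adding `lap G (unit v)` gives `v` its degree and takes one chip from each
neighbour. -/
theorem linSys_nonempty_of_borrow {X : V → ℤ} (v : V) (hv : 0 ≤ X v + G.degree v)
    (hadj : ∀ P, G.Adj P v → 1 ≤ X P) (hrest : ∀ P, P ≠ v → ¬ G.Adj P v → 0 ≤ X P) :
    (linSys G X).Nonempty := by
  refine ⟨_, mem_linSys_add_lap (unit v) fun P => ?_⟩
  rw [Pi.add_apply, lap_unit_apply]
  split_ifs with hP h
  · rwa [hP]
  · linarith [hadj P h]
  · linarith [hrest P hP h]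

theorem linSys_one_sub_unit_sub_unit_nonempty [Nontrivial V] {v : V}
    (hv : ∀ w, w ≠ v → G.Adj w v) (Q : V) : (linSys G (1 - unit v - unit Q)).Nonempty := by
  by_cases hQ : Q = v
  · subst hQ
    obtain ⟨w, hw⟩ := exists_ne Q
    have hdeg : 0 < G.degree Q := (G.degree_pos_iff_exists_adj Q).2 ⟨w, (hv w hw).symm⟩
    refine linSys_nonempty_of_borrow Q ?_ (fun P hP => ?_) (fun P hP _ => ?_)
    · simp only [Pi.sub_apply, Pi.one_apply, unit, if_true]; omega
    · simp [unit, hP.ne]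
    · simp [unit, hP]
  · refine linSys_nonempty_of_effective fun P => ?_
    by_cases hPv : P = v
    · simp [unit, hPv, Ne.symm hQ]
    · by_cases hPQ : P = Q <;> simp [unit, hPv, hPQ, hQ]

theorem linSys_one_sub_unit_sub_unit_sub_self_nonempty {u w : V} (huw : u ≠ w)
    (hnadj : ¬ G.Adj u w) (hu : 0 < G.degree u) :
    (linSys G (1 - unit u - unit w - unit u)).Nonempty := by
  refine linSys_nonempty_of_borrow u ?_ (fun P hP => ?_) (fun P hP _ => ?_)
  · simp only [Pi.sub_apply, Pi.one_apply, unit, if_true, if_neg huw]; omega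
  · have hPw : P ≠ w := by rintro rfl; exact hnadj hP.symm
    simp [unit, hP.ne, hPw]
  · by_cases hPw : P = w <;> simp [unit, hP, hPw, huw.symm]

theorem linSys_one_sub_unit_sub_unit_sub_unit_nonempty {u w : V} (huw : u ≠ w)
    (hnadj : ¬ G.Adj u w) (hu : 0 < G.degree u) (hw : 0 < G.degree w) (R : V) :
    (linSys G (1 - unit u - unit w - unit R)).Nonempty := by
  by_cases hRu : R = u
  · subst hRu
    exact linSys_one_sub_unit_sub_unit_sub_self_nonempty huw hnadj hu
  by_cases hRw : R = w
  · subst hRw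
    rw [sub_right_comm 1 (unit u)]
    exact linSys_one_sub_unit_sub_unit_sub_self_nonempty huw.symm (fun h => hnadj h.symm) hw
  refine linSys_nonempty_of_effective fun P => ?_
  by_cases hPu : P = u
  · subst hPu; simp [unit, huw, Ne.symm hRu]
  by_cases hPw : P = w
  · subst hPw; simp [unit, hPu, Ne.symm hRw]
  by_cases hPR : P = R <;> simp [unit, hPu, hPw, hPR, hRu, hRw]

end Laplacian

section Reduced

variable {V : Type*} [Fintype V] {G : SimpleGraph V}

theorem lap_le_neg_card_of_forall_le {f : V → ℤ} {P : V} (S : Finset V)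
    (hle : ∀ Q, f P ≤ f Q) (hlt : ∀ Q ∉ S, f P < f Q) :
    lap G f P ≤ -(((G.neighborFinset P).filter (fun Q => Q ∉ S)).card : ℤ) := by
  set T := (G.neighborFinset P).filter fun Q => Q ∉ S
  calc lap G f P ≤ ∑ Q, if Q ∈ T then (-1 : ℤ) else 0 := Finset.sum_le_sum fun Q _ => ?_
    _ = -(T.card : ℤ) := by simp [Finset.sum_ite_mem]
  by_cases hadj : G.Adj P Q
  · by_cases hQ : Q ∈ S
    · simp [T, hadj, hQ, hle Q]
    · simp [T, hadj, hQ]; linarith [hlt Q hQ]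
  · simp [T, hadj]

/-- Dhar's criterion: a `q`-reduced divisor that is negative at `q` is not equivalent to an
effective one, because at a vertex minimising `f` the Laplacian `lap G f` is too small. -/
theorem linSys_eq_empty_of_qReduced [Nonempty V] {q : V} {D : V → ℤ} (h : QReduced G q D)
    (hq : D q < 0) : linSys G D = ∅ := by
  rw [Set.eq_empty_iff_forall_notMem]
  rintro E ⟨hE, f, hf⟩
  have hEf : ∀ P, E P = D P + lap G f P := fun P => by
    have := congrFun hf P
    simp only [Pi.sub_apply] at this
    omega
  obtain ⟨P₀, -, hP₀⟩ := Finset.exists_min_image Finset.univ f Finset.univ_nonempty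
  set S := Finset.univ.filter fun P => ∀ Q, f P ≤ f Q
  have hlap : ∀ P ∈ S, lap G f P ≤ -(((G.neighborFinset P).filter (fun Q => Q ∉ S)).card : ℤ) :=
    fun P hP => lap_le_neg_card_of_forall_le S (Finset.mem_filter.1 hP).2 fun Q hQ => by
      obtain ⟨w, hw⟩ : ∃ w, f w < f Q := by simpa [S] using hQ
      linarith [(Finset.mem_filter.1 hP).2 w]
  by_cases hqS : q ∈ S
  · linarith [hE q, hEf q, hlap q hqS]
  · obtain ⟨P, hPS, hP⟩ :=
      h.2 S ⟨P₀, Finset.mem_filter.2 ⟨Finset.mem_univ _, fun Q => hP₀ Q (Finset.mem_univ Q)⟩⟩ hqS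
    linarith [hE P, hEf P, hlap P hPS]

end Reduced

section Harmonic

variable {V : Type*} {G : SimpleGraph V}

theorem divAct_ite_eq_self [DecidableEq V] {σ : G ≃g G} {v : V} (hσ : σ v = v) (a b : ℤ) :
    divAct σ (fun P => if P = v then a else b) = fun P => if P = v then a else b :=
  funext fun P => by simp only [divAct, RelIso.symm_apply_eq, hσ]

theorem sym2_map_mul (σ τ : G ≃g G) (e : Sym2 V) :
    Sym2.map (σ * τ) e = Sym2.map σ (Sym2.map τ e) := by
  rw [Sym2.map_map, RelIso.coe_mul]

theorem sym2_map_inv_map (σ : G ≃g G) (e : Sym2 V) : Sym2.map (⇑(σ⁻¹)) (Sym2.map σ e) = e := by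
  rw [← sym2_map_mul, inv_mul_cancel, RelIso.coe_one, Sym2.map_id, id]

theorem Collapsed.map {Δ : Subgroup (G ≃g G)} {e : Sym2 V} (h : Collapsed Δ e) {σ : G ≃g G}
    (hσ : σ ∈ Δ) : Collapsed Δ (Sym2.map σ e) := by
  obtain ⟨a, b, rfl, ρ, hρ, rfl⟩ := h
  exact ⟨σ a, σ (ρ a), rfl, σ * ρ * σ⁻¹, Δ.mul_mem (Δ.mul_mem hσ hρ) (Δ.inv_mem hσ), by simp⟩

/-- The edges at `P` lying over the image of `e₀` in `G / Δ`. -/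
def edgesOver (Δ : Subgroup (G ≃g G)) (P : V) (e₀ : Sym2 V) : Set (Sym2 V) :=
  {e | e ∈ G.edgeSet ∧ P ∈ e ∧ ∃ σ ∈ Δ, Sym2.map σ e = e₀}

variable {Δ : Subgroup (G ≃g G)}

theorem card_edgesOver_eq_one {P : V} {e₀ : Sym2 V} (hfree : ∀ σ ∈ Δ, σ P = P → σ = 1)
    (he₀ : e₀ ∈ G.edgeSet) (hP : ∃ σ ∈ Δ, P ∈ Sym2.map σ e₀) (hnc : ¬ Collapsed Δ e₀) :
    Nat.card (edgesOver Δ P e₀) = 1 := by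
  obtain ⟨σ, hσ, hPσ⟩ := hP
  refine Nat.card_eq_one_iff_unique.2 ⟨⟨fun ⟨x, _, hPx, σx, hσx, hx⟩ ⟨y, _, hPy, σy, hσy, hy⟩ =>
    Subtype.ext ?_⟩,
    ⟨⟨_, σ.map_mem_edgeSet_iff.2 he₀, hPσ, σ⁻¹, Δ.inv_mem hσ, sym2_map_inv_map σ e₀⟩⟩⟩
  change x = y
  have hτ : σy⁻¹ * σx ∈ Δ := Δ.mul_mem (Δ.inv_mem hσy) hσx
  have hxy : Sym2.map (σy⁻¹ * σx) x = y := by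
    rw [sym2_map_mul, hx, ← hy, sym2_map_inv_map]
  obtain ⟨a, rfl⟩ := Sym2.mem_iff_exists.1 hPx
  rw [← hxy, Sym2.map_mk, Sym2.mem_iff] at hPy
  rcases hPy with hfix | hcoll
  · rw [← hxy, hfree _ hτ hfix.symm, RelIso.coe_one, Sym2.map_id, id]
  · exact absurd (hx ▸ Collapsed.map ⟨a, P, Sym2.eq_swap, _, hτ, hcoll.symm⟩ hσx) hnc

theorem map_mem_edgesOver {P : V} {e₁ e₂ : Sym2 V} {τ : G ≃g G}
    (hτ : ∀ σ ∈ Δ, Commute σ τ) (hP : τ P = P) (h : Sym2.map τ e₁ = e₂) {e : Sym2 V}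
    (he : e ∈ edgesOver Δ P e₁) : Sym2.map τ e ∈ edgesOver Δ P e₂ := by
  obtain ⟨hedge, hPe, σ, hσ, rfl⟩ := he
  refine ⟨τ.map_mem_edgeSet_iff.2 hedge, Sym2.mem_map.2 ⟨P, hPe, hP⟩, σ, hσ, ?_⟩
  rw [← h, ← sym2_map_mul, ← sym2_map_mul, (hτ σ hσ).eq]

theorem card_edgesOver_eq_of_commute {P : V} {e₁ e₂ : Sym2 V} (τ : G ≃g G)
    (hτ : ∀ σ ∈ Δ, Commute σ τ) (hP : τ P = P) (h : Sym2.map τ e₁ = e₂) :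
    Nat.card (edgesOver Δ P e₁) = Nat.card (edgesOver Δ P e₂) := by
  have hτ' : ∀ σ ∈ Δ, Commute σ τ⁻¹ := fun σ hσ => (hτ σ hσ).inv_right
  have hP' : τ⁻¹ P = P := by rw [← hP, RelIso.inv_apply_self, hP]
  have h' : Sym2.map (⇑(τ⁻¹)) e₂ = e₁ := by rw [← h, sym2_map_inv_map]
  exact Nat.card_congr
    { toFun := fun e => ⟨_, map_mem_edgesOver hτ hP h e.2⟩
      invFun := fun e => ⟨_, map_mem_edgesOver hτ' hP' h' e.2⟩
      left_inv := fun e => Subtype.ext (sym2_map_inv_map τ e)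
      right_inv := fun e => Subtype.ext (by simpa using sym2_map_inv_map τ⁻¹ e.1) }

end Harmonic

section Wheel

variable {m : ℕ}

theorem wheel_adj_none_some (i : Fin m) : (wheel m).Adj none (some i) := trivial

theorem wheel_adj_none_of_ne {v : Option (Fin m)} (hv : v ≠ none) : (wheel m).Adj v none := by
  cases v
  · exact absurd rfl hv
  · trivial

theorem wheel_degree_none : (wheel m).degree none = m := by
  have : (wheel m).neighborFinset none = Finset.univ.erase none := by
    ext v
    cases v
    · simp
    · simpa using (wheel_adj_none_of_ne (Option.some_ne_none _)).symm
  rw [← SimpleGraph.card_neighborFinset_eq_degree, this,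
    Finset.card_erase_of_mem (Finset.mem_univ _)]
  simp

variable [NeZero m]

theorem wheel_adj_some_some {i j : Fin m} :
    (wheel m).Adj (some i) (some j) ↔ i ≠ j ∧ (j = i + 1 ∨ i = j + 1) := by
  have key : ∀ a b : Fin m, (a.val + 1) % m = b.val ↔ b = a + 1 := fun a b => by
    rw [Fin.ext_iff, Fin.val_add, Fin.val_one', Nat.add_mod_mod, eq_comm]
  exact and_congr Iff.rfl (or_congr (key i j) (key j i))

theorem wheel_degree_pos (v : Option (Fin m)) : 0 < (wheel m).degree v := by
  rw [SimpleGraph.degree_pos_iff_exists_adj]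
  cases v
  · exact ⟨some 0, trivial⟩
  · exact ⟨none, trivial⟩

theorem wheel_adj_some_add_one (hm : 2 ≤ m) (i : Fin m) :
    (wheel m).Adj (some i) (some (i + 1)) := by
  have h1 : (1 : Fin m) ≠ 0 := by exact_mod_cast Fin.natCast_ne_zero_of_lt (k := 1) one_pos hm
  exact wheel_adj_some_some.2 ⟨fun h => h1 (by linear_combination -h), Or.inl rfl⟩

/-- Dhar's burning test: a nonempty `S ∌ q` contains the hub, which then has the neighbour
`q = some j` outside `S`; or `some j`, with the hub outside `S`; or else a rim vertex `some i`
with `some (i + 1) ∉ S`, which has two neighbours outside `S`. -/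
theorem qReduced_wheel (hm : 2 ≤ m) {W : Option (Fin m) → ℤ} (j : Fin m) {q : Option (Fin m)}
    (hq : q = none ∨ q = some j) (hhub : W none ≤ 0) (hrim : ∀ i, W (some i) ≤ 1)
    (hj : W (some j) ≤ 0) (hnonneg : ∀ P, P ≠ q → 0 ≤ W P) : QReduced (wheel m) q W := by
  refine ⟨hnonneg, fun S hSne hqS => ?_⟩
  by_cases hnS : none ∈ S
  · obtain rfl : q = some j := hq.resolve_left (by rintro rfl; exact hqS hnS)
    refine ⟨none, hnS, hhub.trans_lt ?_⟩
    exact_mod_cast Finset.card_pos.2 ⟨some j, by simpa [hqS] using wheel_adj_none_some j⟩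
  by_cases hjS : some j ∈ S
  · refine ⟨some j, hjS, hj.trans_lt ?_⟩
    exact_mod_cast Finset.card_pos.2 ⟨none, by simpa [hnS] using (wheel_adj_none_some j).symm⟩
  obtain ⟨v, hv⟩ := hSne
  obtain ⟨i₀, rfl⟩ := Option.ne_none_iff_exists'.1 (ne_of_mem_of_not_mem hv hnS)
  obtain ⟨i, hiS, hi1S⟩ := Fin.exists_apply_and_not_apply_add_one (fun k => some k ∈ S) hv hjS
  refine ⟨some i, hiS, (hrim i).trans_lt ?_⟩
  exact_mod_cast Finset.one_lt_card.2 ⟨none,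
    by simpa [hnS] using (wheel_adj_none_some i).symm, some (i + 1),
    by simpa [hi1S] using wheel_adj_some_add_one hm i, (Option.some_ne_none _).symm⟩

theorem linSys_wheel_eq_empty (hm : 2 ≤ m) (j : Fin m) {Q : Option (Fin m)}
    (hQ : Q = none ∨ Q = some j) :
    linSys (wheel m) (1 - unit none - unit Q - unit (some j)) = ∅ := by
  refine linSys_eq_empty_of_qReduced (qReduced_wheel hm j hQ ?_ (fun i => ?_) ?_ fun P hP => ?_) ?_
  all_goals rcases hQ with rfl | rfl
  all_goals try cases P
  all_goals simp [unit] at *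
  all_goals split_ifs <;> omega

theorem rankEq_wheel_sub_hub (hm : 2 ≤ m) : RankEq (wheel m) (1 - unit none) 1 := by
  refine rankEq_one_of (linSys_one_sub_unit_sub_unit_nonempty fun _ => wheel_adj_none_of_ne)
    ((effective_unit (some 0)).add (effective_unit (some 0)))
    (by rw [degDiv_add, degDiv_unit]; norm_num) ?_
  rw [← sub_sub]
  exact linSys_wheel_eq_empty hm 0 (Or.inr rfl)

theorem rankEq_wheel_sub_hub_sub_unit (hm : 2 ≤ m) (Q : Option (Fin m)) :
    RankEq (wheel m) (1 - unit none - unit Q) 0 := by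
  obtain ⟨j, hj⟩ : ∃ j, Q = none ∨ Q = some j := by
    cases Q
    · exact ⟨0, Or.inl rfl⟩
    · exact ⟨_, Or.inr rfl⟩
  exact rankEq_zero_of (linSys_one_sub_unit_sub_unit_nonempty (fun _ => wheel_adj_none_of_ne) Q)
    (some j) (linSys_wheel_eq_empty hm j hj)

theorem wheel_some_ne_and_not_adj_add_two (hm : 4 ≤ m) (i : Fin m) :
    some i ≠ some (i + 2) ∧ ¬ (wheel m).Adj (some i) (some (i + 2)) := by
  have h1 : (1 : Fin m) ≠ 0 := by
    exact_mod_cast Fin.natCast_ne_zero_of_lt (k := 1) (by omega) (by omega)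
  have h2 : (2 : Fin m) ≠ 0 := by
    exact_mod_cast Fin.natCast_ne_zero_of_lt (k := 2) (by omega) (by omega)
  have h3 : (3 : Fin m) ≠ 0 := by
    exact_mod_cast Fin.natCast_ne_zero_of_lt (k := 3) (by omega) (by omega)
  refine ⟨fun h => h2 (by linear_combination -(Option.some_inj.1 h)), ?_⟩
  rw [wheel_adj_some_some]
  rintro ⟨-, h | h⟩
  · exact h1 (by linear_combination h)
  · exact h3 (by linear_combination -h)

theorem not_isGaloisPoint_wheel_some (hm : 4 ≤ m) (i : Fin m) :
    ¬ IsGaloisPoint (wheel m) 1 (some i) := by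
  rintro ⟨-, hrank, -⟩
  obtain ⟨hne, hnadj⟩ := wheel_some_ne_and_not_adj_add_two hm i
  exact not_rankEq_zero_of (linSys_one_sub_unit_sub_unit_sub_unit_nonempty hne hnadj
    (wheel_degree_pos _) (wheel_degree_pos _)) (hrank (some (i + 2)))

def rotation (t : Fin m) : wheel m ≃g wheel m where
  toEquiv := Equiv.optionCongr (Equiv.addRight t)
  map_rel_iff' := by
    rintro (_ | i) (_ | j)
    · rfl
    · rfl
    · rfl
    · simp [wheel_adj_some_some, add_right_comm _ t]

@[simp]
theorem rotation_none (t : Fin m) : rotation t none = none := rfl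

@[simp]
theorem rotation_some (t i : Fin m) : rotation t (some i) = some (i + t) := rfl

theorem rotation_add (s t : Fin m) : rotation (s + t) = rotation s * rotation t :=
  RelIso.ext fun v => by cases v <;> simp [add_comm s, add_assoc]

theorem rotation_injective : Function.Injective (rotation (m := m)) := fun s t h => by
  simpa using congrArg (· (some 0)) h

def rotationHom : Multiplicative (Fin m) →* (wheel m ≃g wheel m) where
  toFun t := rotation t.toAdd
  map_one' := RelIso.ext fun v => by cases v <;> simp
  map_mul' s t := rotation_add s.toAdd t.toAdd

def rotations : Subgroup (wheel m ≃g wheel m) := (rotationHom (m := m)).range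

theorem mem_rotations {σ : wheel m ≃g wheel m} : σ ∈ rotations ↔ ∃ t, rotation t = σ :=
  ⟨fun ⟨t, h⟩ => ⟨t.toAdd, h⟩, fun ⟨t, h⟩ => ⟨Multiplicative.ofAdd t, h⟩⟩

theorem card_rotations : Nat.card (rotations (m := m)) = m := by
  rw [rotations, ← Nat.card_congr (MonoidHom.ofInjective (f := rotationHom (m := m))
    rotation_injective).toEquiv]
  simp

theorem commute_rotation {σ : wheel m ≃g wheel m} (hσ : σ ∈ rotations) (t : Fin m) :
    Commute σ (rotation t) := by
  obtain ⟨s, rfl⟩ := mem_rotations.1 hσ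
  rw [Commute, SemiconjBy, ← rotation_add, ← rotation_add, add_comm]

theorem eq_spoke_of_none_mem_map {e : Sym2 (Option (Fin m))} (he : e ∈ (wheel m).edgeSet)
    {σ : wheel m ≃g wheel m} (hσ : σ ∈ rotations) (h : none ∈ Sym2.map σ e) :
    ∃ a, e = s(none, some a) := by
  obtain ⟨t, rfl⟩ := mem_rotations.1 hσ
  obtain ⟨v, hv, hvt⟩ := Sym2.mem_map.1 h
  obtain rfl : v = none := by cases v <;> simp_all
  obtain ⟨w, rfl⟩ := Sym2.mem_iff_exists.1 hv
  cases w
  · exact absurd he ((wheel m).loopless.irrefl none)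
  · exact ⟨_, rfl⟩

theorem quotHarmonic_of_le_rotations {Δ : Subgroup (wheel m ≃g wheel m)} (hΔ : Δ ≤ rotations) :
    QuotHarmonic (wheel m) Δ := by
  intro P e₁ e₂ he₁ he₂ hP₁ hP₂ hnc₁ hnc₂
  change Nat.card (edgesOver Δ P e₁) = Nat.card (edgesOver Δ P e₂)
  cases P with
  | none =>
    obtain ⟨σ₁, hσ₁, h₁⟩ := hP₁
    obtain ⟨σ₂, hσ₂, h₂⟩ := hP₂
    obtain ⟨a, rfl⟩ := eq_spoke_of_none_mem_map he₁ (hΔ hσ₁) h₁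
    obtain ⟨b, rfl⟩ := eq_spoke_of_none_mem_map he₂ (hΔ hσ₂) h₂
    exact card_edgesOver_eq_of_commute (rotation (b - a))
      (fun σ hσ => commute_rotation (hΔ hσ) _) rfl (by simp)
  | some i =>
    have hfree : ∀ σ ∈ Δ, σ (some i) = some i → σ = 1 := fun σ hσ h => by
      obtain ⟨t, rfl⟩ := mem_rotations.1 (hΔ hσ)
      obtain rfl : t = 0 := by simpa using h
      exact rotationHom.map_one
    rw [card_edgesOver_eq_one hfree he₁ hP₁ hnc₁, card_edgesOver_eq_one hfree he₂ hP₂ hnc₂]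

theorem isGaloisPoint_wheel_none (hm : 2 ≤ m) : IsGaloisPoint (wheel m) 1 none := by
  set E₁ : Option (Fin m) → ℤ := fun P => if P = none then 0 else 1
  set E₂ : Option (Fin m) → ℤ := fun P => if P = none then (m : ℤ) else 0
  have hE₁ : 1 - unit none = E₁ := funext fun P => by cases P <;> simp [E₁, unit]
  have hE₂ : E₁ + lap (wheel m) (unit none) = E₂ := funext fun P => by
    cases P <;> simp [E₁, E₂, lap_unit_apply, wheel_degree_none, wheel_adj_none_of_ne]
  have hE₂eff : Effective E₂ := fun P => by positivity
  refine ⟨rankEq_wheel_sub_hub hm, rankEq_wheel_sub_hub_sub_unit hm, rotations, ?_,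
    ⟨none, some 0, ?_⟩, fun Δ hΔ => quotHarmonic_of_le_rotations hΔ, E₁, E₂, ?_, ?_, ?_,
    fun σ hσ => ?_⟩
  · rw [card_rotations]
    simp [degDiv]
  · rintro ⟨σ, hσ, h⟩
    obtain ⟨t, rfl⟩ := mem_rotations.1 hσ
    simp at h
  · intro h
    have := congrFun h none
    simp only [E₁, E₂, if_true] at this
    exact NeZero.ne m (by exact_mod_cast this.symm)
  · rw [hE₁]
    exact mem_linSys_self fun P => by positivity
  · rw [hE₁, ← hE₂]
    exact mem_linSys_add_lap _ (hE₂ ▸ hE₂eff)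
  · obtain ⟨t, rfl⟩ := mem_rotations.1 hσ
    exact ⟨divAct_ite_eq_self (rotation_none t) 0 1,
      divAct_ite_eq_self (rotation_none t) (m : ℤ) 0⟩

end Wheel

end GraphDiv

open GraphDiv in
/-- On the wheel `W_n` (`n = m + 1 ≥ 5`), the hub is a Galois point with respect
to `|P₁ + ⋯ + Pₙ|` and no rim vertex is; in particular there is exactly one
Galois point. -/
theorem stmt14 (m : ℕ) (hm : 4 ≤ m) :
    IsGaloisPoint (wheel m) (fun _ => 1) none ∧
    ∀ i : Fin m, ¬ IsGaloisPoint (wheel m) (fun _ => 1) (some i) := by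
  have : NeZero m := ⟨by omega⟩
  exact ⟨isGaloisPoint_wheel_none (by omega), not_isGaloisPoint_wheel_some hm⟩
end

section
/- Let G be a finite connected 2-edge-connected simple graph with vertex set {P_1, …, P_n} and D = P_1 + ⋯ + P_n. If r(D) = 2 and there exist distinct indices i ≠ j such that P_i and P_j are both Galois points with respect to |D|, then G is the complete graph K_n. -/
open scoped Classical

/-!
On a 2-edge-connected graph distinct vertices are not linearly equivalent: if
`P - P' = Δ(f)`, the Laplacian of `f` has degree at least `2` on the set where `f` is
maximal, since at least two edges leave that set. Hence an automorphism fixing a divisor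
`E ∈ |D - P|` fixes `P`. For a harmonic action, an automorphism fixing a vertex and one
of its neighbours fixes all of its neighbours (otherwise the fibres over the two edges
would have different sizes), so by connectedness it is the identity. The Galois group
`H` of `P` therefore acts freely on the orbit of a neighbour of `P`, which lies in
`V ∖ {P}`; as `|H| = n - 1`, this orbit is all of `V ∖ {P}`. So `P` is adjacent to
every vertex and its stabilizer is transitive on the others, and transporting the
adjacencies of the second Galois point `Q` by this stabilizer joins any two vertices.
-/

theorem MulAction.orbit_eq_compl_singleton {K X : Type*} [Group K] [MulAction K X] [Finite X]
    {p x : X} (hp : ∀ k : K, k • p = p) (hx : x ≠ p) (hfree : stabilizer K x = ⊥)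
    (hcard : Nat.card K + 1 = Nat.card X) : orbit K x = {p}ᶜ := by
  have hsub : orbit K x ⊆ {p}ᶜ := by
    rintro _ ⟨k, rfl⟩ (h : k • x = p)
    exact hx (by rw [← inv_smul_smul k x, h, hp])
  refine Set.eq_of_subset_of_ncard_le hsub ?_
  rw [← index_stabilizer, hfree, Subgroup.index_bot, Set.ncard_compl, Set.ncard_singleton]
  omega

namespace GraphDiv

section Automorphisms

variable {V : Type*} {G : SimpleGraph V}

lemma divAct_sub (σ : G ≃g G) (D D' : V → ℤ) :
    divAct σ (D - D') = divAct σ D - divAct σ D' :=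
  rfl

lemma divAct_unit (σ : G ≃g G) (P : V) : divAct σ (unit P) = unit (σ P) := by
  funext v
  simp only [divAct, unit, RelIso.symm_apply_eq]

lemma not_collapsed_of_forall_apply_eq {Δ : Subgroup (G ≃g G)} {x z : V}
    (hΔ : ∀ τ ∈ Δ, τ x = x) (hxz : x ≠ z) : ¬ Collapsed Δ s(x, z) := by
  rintro ⟨a, b, hab, τ, hτ, rfl⟩
  rcases Sym2.eq_iff.mp hab with ⟨rfl, hz⟩ | ⟨hx, rfl⟩
  · exact hxz (hz.trans (hΔ τ hτ)).symm
  · exact hxz (τ.injective (hx.symm.trans (hΔ τ hτ).symm)).symm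

lemma card_fiber_eq_one {Δ : Subgroup (G ≃g G)} {x : V} {e : Sym2 V} (he : e ∈ G.edgeSet)
    (hxe : x ∈ e) (hΔ : ∀ τ ∈ Δ, Sym2.map τ e = e) :
    Nat.card {e' : Sym2 V // e' ∈ G.edgeSet ∧ x ∈ e' ∧ ∃ τ ∈ Δ, Sym2.map τ e' = e} = 1 := by
  rw [Nat.card_eq_one_iff_unique]
  refine ⟨⟨fun ⟨e₁, _, _, τ₁, hτ₁, h₁⟩ ⟨e₂, _, _, τ₂, hτ₂, h₂⟩ => Subtype.ext ?_⟩,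
    ⟨⟨e, he, hxe, 1, Δ.one_mem, by simp⟩⟩⟩
  exact (Sym2.map.injective τ₁.injective (h₁.trans (hΔ τ₁ hτ₁).symm)).trans
    (Sym2.map.injective τ₂.injective (h₂.trans (hΔ τ₂ hτ₂).symm)).symm

lemma one_lt_card_fiber [Finite V] {σ : G ≃g G} {x z : V} (hxz : G.Adj x z) (hx : σ x = x)
    (hz : σ z ≠ z) : 1 < Nat.card {e : Sym2 V // e ∈ G.edgeSet ∧ x ∈ e ∧
      ∃ τ ∈ Subgroup.zpowers σ, Sym2.map τ e = s(x, z)} := by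
  have hx' : σ⁻¹ x = x := by rw [← hx, RelIso.inv_apply_self, hx]
  have hadj : G.Adj x (σ⁻¹ z) := by simpa [hx'] using (σ⁻¹).map_adj_iff.mpr hxz
  rw [Finite.one_lt_card_iff_nontrivial]
  refine ⟨⟨s(x, z), hxz, Sym2.mem_mk_left _ _, 1, Subgroup.one_mem _, by simp⟩,
    ⟨s(x, σ⁻¹ z), hadj, Sym2.mem_mk_left _ _, σ, Subgroup.mem_zpowers σ, by simp [hx]⟩,
    fun h => hz ?_⟩
  have : z = σ⁻¹ z := Sym2.congr_right.mp (congrArg Subtype.val h)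
  exact (congrArg σ this).trans (RelIso.apply_inv_self σ z)

lemma QuotHarmonic.apply_eq_of_adj [Finite V] {σ : G ≃g G}
    (hq : QuotHarmonic G (Subgroup.zpowers σ)) {x y z : V} (hxy : G.Adj x y) (hxz : G.Adj x z)
    (hx : σ x = x) (hy : σ y = y) : σ z = z := by
  by_contra hz
  have hfix : ∀ τ ∈ Subgroup.zpowers σ, τ x = x ∧ τ y = y := fun τ hτ =>
    Subgroup.zpowers_le.mpr (show σ ∈ MulAction.stabilizer _ x ⊓ MulAction.stabilizer _ y
      from ⟨hx, hy⟩) hτ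
  have hinc : ∀ e : Sym2 V, x ∈ e → ∃ τ ∈ Subgroup.zpowers σ, x ∈ Sym2.map τ e :=
    fun e he => ⟨1, Subgroup.one_mem _, by simpa⟩
  have hcard := hq x s(x, y) s(x, z) hxy hxz (hinc _ (Sym2.mem_mk_left _ _))
    (hinc _ (Sym2.mem_mk_left _ _))
    (not_collapsed_of_forall_apply_eq (fun τ hτ => (hfix τ hτ).1) hxy.ne)
    (not_collapsed_of_forall_apply_eq (fun τ hτ => (hfix τ hτ).1) hxz.ne)
  rw [card_fiber_eq_one hxy (Sym2.mem_mk_left _ _)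
    (fun τ hτ => by rw [Sym2.map_mk, (hfix τ hτ).1, (hfix τ hτ).2])] at hcard
  exact (one_lt_card_fiber hxz hx hz).ne hcard

lemma HarmonicAction.eq_one_of_apply_eq_of_adj [Finite V] (hG : G.Connected)
    {H : Subgroup (G ≃g G)} (hH : HarmonicAction G H) {σ : G ≃g G} (hσ : σ ∈ H) {x y : V}
    (hxy : G.Adj x y) (hx : σ x = x) (hy : σ y = y) : σ = 1 := by
  have hq := hH _ (Subgroup.zpowers_le.mpr hσ)
  have hwalk : ∀ {u v : V}, G.Walk u v → σ u = u → (∃ w, G.Adj u w ∧ σ w = w) → σ v = v := by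
    intro u v p
    induction p with
    | nil => exact fun hu _ => hu
    | cons huv _ ih =>
      rintro hu ⟨w, huw, hw⟩
      exact ih (hq.apply_eq_of_adj huw huv hu hw) ⟨_, huv.symm, hu⟩
  exact RelIso.ext fun u => hwalk (hG.preconnected x u).some hx ⟨y, hxy, hy⟩

end Automorphisms

section Laplacian

variable {V : Type*} [Fintype V] {G : SimpleGraph V}

lemma lap_sub (f g : V → ℤ) : lap G (f - g) = lap G f - lap G g := by
  funext v
  simp only [lap, Pi.sub_apply, ← Finset.sum_sub_distrib]
  refine Finset.sum_congr rfl fun _ _ => ?_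
  split_ifs <;> ring

lemma lap_divAct (σ : G ≃g G) (f : V → ℤ) : lap G (divAct σ f) = divAct σ (lap G f) := by
  funext x
  simp only [lap, divAct]
  refine Fintype.sum_equiv σ.symm.toEquiv _ _ fun u => ?_
  simp only [RelIso.coe_fn_toEquiv, SimpleGraph.Iso.map_adj_iff]

lemma LinEquiv.divAct {D D' : V → ℤ} (h : LinEquiv G D D') (σ : G ≃g G) :
    LinEquiv G (GraphDiv.divAct σ D) (GraphDiv.divAct σ D') := by
  obtain ⟨f, hf⟩ := h
  exact ⟨GraphDiv.divAct σ f, by rw [lap_divAct, ← hf, divAct_sub]⟩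

lemma LinEquiv.of_sub_sub {E D A B : V → ℤ} (hA : LinEquiv G E (D - A))
    (hB : LinEquiv G E (D - B)) : LinEquiv G B A := by
  obtain ⟨f, hf⟩ := hA
  obtain ⟨g, hg⟩ := hB
  refine ⟨g - f, ?_⟩
  rw [lap_sub, ← hf, ← hg]
  abel

lemma sum_lap_eq_sum_compl (S : Finset V) (g : V → ℤ) :
    ∑ u ∈ S, lap G g u = ∑ u ∈ S, ∑ t ∈ Sᶜ, if G.Adj u t then g u - g t else 0 := by
  set F : V → V → ℤ := fun u t => if G.Adj u t then g u - g t else 0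
  have hF : ∀ u t, F u t = -F t u := fun u t => by
    simp only [F, G.adj_comm u t]
    split_ifs <;> ring
  have hinner : ∑ u ∈ S, ∑ t ∈ S, F u t = 0 := by
    have : ∑ u ∈ S, ∑ t ∈ S, F u t = -∑ u ∈ S, ∑ t ∈ S, F u t := by
      conv_lhs => rw [Finset.sum_comm]
      simp only [← Finset.sum_neg_distrib]
      exact Finset.sum_congr rfl fun _ _ => Finset.sum_congr rfl fun _ _ => hF _ _
    linarith
  simp only [lap, ← Finset.sum_add_sum_compl S]
  rw [Finset.sum_add_distrib]
  exact add_eq_right.mpr hinner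

lemma TwoEdgeConnected.one_lt_card_cut (h2 : TwoEdgeConnected G) {S : Finset V} {a b : V}
    (ha : a ∈ S) (hb : b ∉ S) : 1 < (Finset.filter (fun p => G.Adj p.1 p.2) (S ×ˢ Sᶜ)).card := by
  obtain ⟨p⟩ := h2.1.preconnected a b
  obtain ⟨d, -, hd₁, hd₂⟩ := p.exists_boundary_dart S ha hb
  obtain ⟨q⟩ := (h2.2 _ _ d.adj).preconnected a b
  obtain ⟨d', -, hd₁', hd₂'⟩ := q.exists_boundary_dart S ha hb
  obtain ⟨hadj', hne'⟩ := SimpleGraph.deleteEdges_adj.mp d'.adj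
  rw [Finset.one_lt_card]
  refine ⟨d.toProd, ?_, (d'.fst, d'.snd), ?_, fun h => hne' ?_⟩
  · simp_all [d.adj]
  · simp_all
  · simp [← h]

lemma TwoEdgeConnected.two_le_sum_lap (h2 : TwoEdgeConnected G) (g : V → ℤ) {u₀ t : V}
    (hmax : ∀ u, g u ≤ g u₀) (ht : g t < g u₀) :
    2 ≤ ∑ u ∈ Finset.filter (fun u => g u = g u₀) Finset.univ, lap G g u := by
  set S := Finset.filter (fun u => g u = g u₀) Finset.univ
  have hcut := h2.one_lt_card_cut (S := S) (a := u₀) (b := t) (by simp [S]) (by simp [S]; omega)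
  rw [Finset.card_filter, Finset.sum_product] at hcut
  calc (2 : ℤ) ≤ ∑ u ∈ S, ∑ t ∈ Sᶜ, ((if G.Adj u t then 1 else 0 : ℕ) : ℤ) := by
        exact_mod_cast hcut
    _ ≤ ∑ u ∈ S, ∑ t ∈ Sᶜ, if G.Adj u t then g u - g t else 0 := by
        refine Finset.sum_le_sum fun u hu => Finset.sum_le_sum fun t ht => ?_
        have hu : g u = g u₀ := (Finset.mem_filter.mp hu).2
        have ht : g t ≠ g u₀ := by simpa [S] using ht
        have := hmax t
        split_ifs <;> omega
    _ = ∑ u ∈ S, lap G g u := (sum_lap_eq_sum_compl S g).symm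

lemma TwoEdgeConnected.eq_of_linEquiv_unit (h2 : TwoEdgeConnected G) {v w : V}
    (h : LinEquiv G (unit v) (unit w)) : v = w := by
  obtain ⟨g, hg⟩ := h
  obtain ⟨u₀, -, hmax⟩ := Finset.exists_max_image Finset.univ g ⟨v, Finset.mem_univ v⟩
  by_contra hvw
  by_cases hconst : ∀ t, g t = g u₀
  · have hv : lap G g v = 0 := Finset.sum_eq_zero fun t _ => by simp [hconst]
    simp [← hg, unit, hvw] at hv
  obtain ⟨t, ht⟩ := not_forall.mp hconst
  have hsum := h2.two_le_sum_lap g (fun u => hmax u (Finset.mem_univ u))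
    (lt_of_le_of_ne (hmax t (Finset.mem_univ t)) ht)
  rw [← hg] at hsum
  simp only [Pi.sub_apply, Finset.sum_sub_distrib, unit, Finset.sum_ite_eq'] at hsum
  split_ifs at hsum <;> omega

lemma TwoEdgeConnected.apply_eq_of_divAct_eq (h2 : TwoEdgeConnected G) {D E : V → ℤ} {P : V}
    (hE : E ∈ linSys G (D - unit P)) {σ : G ≃g G} (hD : divAct σ D = D)
    (hσE : divAct σ E = E) : σ P = P := by
  have hσ : LinEquiv G E (D - unit (σ P)) := by
    simpa only [hσE, divAct_sub, hD, divAct_unit] using hE.2.divAct σ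
  exact h2.eq_of_linEquiv_unit (hE.2.of_sub_sub hσ)

end Laplacian

section Galois

variable {V : Type*} [Fintype V] {G : SimpleGraph V} {P : V}

lemma IsGaloisPoint.exists_orbit_eq (h2 : TwoEdgeConnected G)
    (hP : IsGaloisPoint G (fun _ => 1) P) {v : V} (hv : v ≠ P) :
    ∃ H : Subgroup (G ≃g G), (∀ σ ∈ H, σ P = P) ∧
      ∃ w, G.Adj P w ∧ MulAction.orbit H w = {P}ᶜ := by
  obtain ⟨-, -, H, hcard, -, hH, E, _, -, hE, -, hfixE⟩ := hP
  have hfix : ∀ σ ∈ H, σ P = P := fun σ hσ => h2.apply_eq_of_divAct_eq hE rfl (hfixE σ hσ).1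
  obtain ⟨p⟩ := h2.1.preconnected P v
  have hw := p.adj_snd (SimpleGraph.Walk.not_nil_of_ne hv.symm)
  refine ⟨H, hfix, _, hw,
    MulAction.orbit_eq_compl_singleton (fun σ => hfix σ σ.2) hw.ne.symm ?_ ?_⟩
  · exact (Subgroup.eq_bot_iff_forall _).mpr fun σ hσ =>
      Subtype.ext (hH.eq_one_of_apply_eq_of_adj h2.1 σ.2 hw (hfix σ σ.2) hσ)
  · simp only [degDiv, Finset.sum_const, Finset.card_univ, nsmul_eq_mul, mul_one] at hcard
    rw [Nat.card_eq_fintype_card (α := V)]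
    omega

lemma IsGaloisPoint.adj (h2 : TwoEdgeConnected G) (hP : IsGaloisPoint G (fun _ => 1) P)
    {v : V} (hv : v ≠ P) : G.Adj P v := by
  obtain ⟨H, hfix, w, hw, horb⟩ := hP.exists_orbit_eq h2 hv
  obtain ⟨σ, rfl⟩ : v ∈ MulAction.orbit H w := horb ▸ hv
  simpa [Subgroup.smul_def, hfix σ σ.2] using σ.1.map_adj_iff.mpr hw

lemma IsGaloisPoint.exists_apply_eq (h2 : TwoEdgeConnected G)
    (hP : IsGaloisPoint G (fun _ => 1) P) {v w : V} (hv : v ≠ P) (hw : w ≠ P) :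
    ∃ σ : G ≃g G, σ P = P ∧ σ v = w := by
  obtain ⟨H, hfix, u, -, horb⟩ := hP.exists_orbit_eq h2 hv
  have hvu : v ∈ MulAction.orbit H u := horb ▸ hv
  obtain ⟨σ, hσ⟩ : w ∈ MulAction.orbit H v := by
    rw [MulAction.orbit_eq_iff.mpr hvu, horb]
    exact hw
  exact ⟨σ, hfix σ σ.2, hσ⟩

end Galois

end GraphDiv

open GraphDiv in
theorem stmt15_general {V : Type*} [Fintype V] (G : SimpleGraph V)
    (h2 : TwoEdgeConnected G)
    (P Q : V) (hPQ : P ≠ Q)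
    (hP : IsGaloisPoint G (fun _ => 1) P)
    (hQ : IsGaloisPoint G (fun _ => 1) Q) :
    G = ⊤ := by
  ext v w
  refine ⟨G.ne_of_adj, fun hvw => ?_⟩
  by_cases hvP : v = P
  · subst hvP
    exact hP.adj h2 (Ne.symm hvw)
  obtain ⟨σ, -, rfl⟩ := hP.exists_apply_eq h2 hPQ.symm hvP
  have hw : σ.symm w ≠ Q := fun h => hvw (by rw [← h, RelIso.apply_symm_apply])
  simpa using σ.map_adj_iff.mpr (hQ.adj h2 hw)

open GraphDiv in
/-- If `D` is the sum of all vertices of a 2-edge-connected graph, `r(D) = 2`,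
and two distinct vertices are Galois points with respect to `|D|`, then the
graph is complete. -/
theorem stmt15 {V : Type*} [Fintype V] (G : SimpleGraph V)
    (h2 : TwoEdgeConnected G)
    (hrank : RankEq G (fun _ => 1) 2)
    (P Q : V) (hPQ : P ≠ Q)
    (hP : IsGaloisPoint G (fun _ => 1) P)
    (hQ : IsGaloisPoint G (fun _ => 1) Q) :
    G = ⊤ :=
  stmt15_general G h2 P Q hPQ hP hQ
end
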